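/- The competitive ratio of the QA algorithm for precedence-constrained tasks on m CPUs and k GPUs is at least 2·sqrt(m/k) + 1 − 1/k: there exists a family of DAG instances on which QA's makespan divided by the optimal makespan is at least 2·sqrt(m/k) + 1 − 1/k. -/

import Mathlib

/-- A non-preemptive schedule of tasks (indexed by `ι`) on a heterogeneous
platform with `m` CPUs and `k` GPUs; task `j` takes time `pc j` on a CPU and
`pg j` on a GPU. `cpu j = true` means `j` runs on CPU number `proc j`. -/
structure Sched (ι : Type) (m k : ℕ) (pc pg : ι → ℝ) where
  cpu : ι → Bool
  proc : ι → ℕ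
  hproc : ∀ j, proc j < if cpu j then m else k
  start : ι → ℝ
  hstart : ∀ j, 0 ≤ start j
  disj : ∀ i j : ι, i ≠ j → cpu i = cpu j → proc i = proc j →
    start i + (if cpu i then pc i else pg i) ≤ start j ∨
    start j + (if cpu j then pc j else pg j) ≤ start i

/-- Processing time of task `j` on its assigned resource type. -/
def Sched.ptime {ι : Type} {m k : ℕ} {pc pg : ι → ℝ} (S : Sched ι m k pc pg)
    (j : ι) : ℝ :=
  if S.cpu j then pc j else pg j

/-- Completion time of task `j`. -/
def Sched.finish {ι : Type} {m k : ℕ} {pc pg : ι → ℝ} (S : Sched ι m k pc pg)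
    (j : ι) : ℝ :=
  S.start j + S.ptime j

/-- Processor `q` of type `b` (`true` = CPU) is busy at time `t`. -/
def Sched.busyAt {ι : Type} {m k : ℕ} {pc pg : ι → ℝ} (S : Sched ι m k pc pg)
    (b : Bool) (q : ℕ) (t : ℝ) : Prop :=
  ∃ j, S.cpu j = b ∧ S.proc j = q ∧ S.start j ≤ t ∧ t < S.finish j

/-- Makespan: maximum completion time. -/
noncomputable def Sched.makespan {ι : Type} [Fintype ι] {m k : ℕ} {pc pg : ι → ℝ}
    (hne : Nonempty ι) (S : Sched ι m k pc pg) : ℝ :=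
  Finset.univ.sup' (Finset.univ_nonempty_iff.mpr hne) S.finish

/-- List schedule: no processor (of either type) is idle while an
unstarted task remains. -/
def Sched.isList {ι : Type} {m k : ℕ} {pc pg : ι → ℝ}
    (S : Sched ι m k pc pg) : Prop :=
  ∀ t : ℝ, 0 ≤ t →
    (∃ (b : Bool) (q : ℕ), q < (if b then m else k) ∧ ¬ S.busyAt b q t) →
    ∀ j, S.start j ≤ t

/-- A schedule consistent with the on-line Quick Allocation algorithm for the
precedence relation `prec`: each task is assigned to CPU iff
`pc j/√m ≤ pg j/√k`, precedences are respected, and within each resource type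
list scheduling is used (no processor of the type chosen for a ready task is
idle while the task has not started). -/
def IsQAConsistent {n m k : ℕ} {pc pg : Fin n → ℝ}
    (S : Sched (Fin n) m k pc pg) (prec : Fin n → Fin n → Prop) : Prop :=
  (∀ j, S.cpu j = true ↔
    pc j * Real.sqrt (k : ℝ) ≤ pg j * Real.sqrt (m : ℝ)) ∧
  (∀ i j, prec i j → Sched.finish S i ≤ S.start j) ∧
  (∀ t : ℝ, 0 ≤ t → ∀ j : Fin n,
    (∀ i, prec i j → Sched.finish S i ≤ t) →
    (∃ q : ℕ, q < (if S.cpu j then m else k) ∧ ¬ S.busyAt (S.cpu j) q t) →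
    S.start j ≤ t)

namespace QALB

noncomputable def mu (m k : ℕ) : ℝ := Real.sqrt ((m : ℝ) / k)

lemma one_le_mu {m k : ℕ} (hk : 0 < k) (hkm : k ≤ m) : 1 ≤ mu m k := by
  rw [mu, Real.one_le_sqrt]
  rw [le_div_iff₀ (by exact_mod_cast hk)]
  · simpa using (by exact_mod_cast hkm : (k:ℝ) ≤ m)

lemma mu_pos {m k : ℕ} (hk : 0 < k) (hkm : k ≤ m) : 0 < mu m k :=
  lt_of_lt_of_le zero_lt_one (one_le_mu hk hkm)

lemma mu_mul_sqrt {m k : ℕ} (hk : 0 < k) : mu m k * Real.sqrt k = Real.sqrt m := by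
  rw [mu, ← Real.sqrt_mul (by positivity)]
  congr 1
  field_simp

lemma mu_sq {m k : ℕ} (hk : 0 < k) : mu m k ^ 2 = (m : ℝ) / k :=
  Real.sq_sqrt (by positivity)

/-- slot-disjointness helper -/
lemma slot_disj {b : ℝ} (hb : 0 ≤ b) {p q : ℕ} (h : p ≠ q) :
    (p : ℝ) * b + b ≤ (q : ℝ) * b ∨ (q : ℝ) * b + b ≤ (p : ℝ) * b := by
  rcases Nat.lt_or_ge p q with h' | h'
  · left
    have : (p : ℝ) + 1 ≤ q := by exact_mod_cast h'
    nlinarith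
  · right
    have h'' : q < p := lt_of_le_of_ne h' (Ne.symm h)
    have : (q : ℝ) + 1 ≤ p := by exact_mod_cast h''
    nlinarith

lemma last_divmod {k c : ℕ} (hk : 0 < k) (hc : 0 < c) :
    (k * c - 1) % c = c - 1 ∧ (k * c - 1) / c = k - 1 := by
  obtain ⟨K, rfl⟩ : ∃ K, k = K + 1 := ⟨k - 1, by omega⟩
  have h0 : (K + 1) * c = c * K + c := by ring
  have h1 : (K + 1) * c - 1 = (c - 1) + c * K := by omega
  rw [h1]
  constructor
  · rw [Nat.add_mul_mod_self_left, Nat.mod_eq_of_lt (by omega)]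
  · rw [Nat.add_mul_div_left _ _ hc, Nat.div_eq_of_lt (by omega)]
    omega

/-- processing times -/
noncomputable def pcf (m k c NB : ℕ) (s η : ℝ) : Fin (k * c + 1) → ℝ :=
  fun j => if (j : ℕ) = k * c then mu m k * (1 - s)
    else if (j : ℕ) < NB then s * mu m k * (1 + η)
    else 2 * mu m k * s

noncomputable def pgf (k c : ℕ) (s : ℝ) : Fin (k * c + 1) → ℝ :=
  fun j => if (j : ℕ) = k * c then 1 - s else s

def precf (k c : ℕ) : Fin (k * c + 1) → Fin (k * c + 1) → Prop :=
  fun i j => (i : ℕ) = k * c - 1 ∧ (j : ℕ) = k * c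

/-- the QA schedule: all tasks except the last (`L`) go to GPUs, `c` per GPU,
task `k*c-1` (`A`) being scheduled last on GPU `k-1`; `L` goes on CPU 0 at
time `c*s`. -/
noncomputable def SQA (m k c NB : ℕ) (s η : ℝ) (hm : 0 < m) (hc : 0 < c)
    (hs : 0 ≤ s) :
    Sched (Fin (k * c + 1)) m k (pcf m k c NB s η) (pgf k c s) where
  cpu j := decide ((j : ℕ) = k * c)
  proc j := if (j : ℕ) = k * c then 0 else (j : ℕ) / c
  hproc j := by
    by_cases h : (j : ℕ) = k * c
    · simpa [h] using hm
    · have hj : (j : ℕ) < k * c := by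
        have := j.isLt
        omega
      have hlt : (j : ℕ) / c < k := (Nat.div_lt_iff_lt_mul hc).2 (by omega)
      simpa [h] using hlt
  start j := if (j : ℕ) = k * c then (c : ℝ) * s else (((j : ℕ) % c : ℕ) : ℝ) * s
  hstart j := by
    by_cases h : (j : ℕ) = k * c <;> simp [h] <;> positivity
  disj i j hij hcpu hproc := by
    by_cases hi : (i : ℕ) = k * c <;> by_cases hj : (j : ℕ) = k * c
    · exact absurd (Fin.ext (hi.trans hj.symm)) hij
    · simp [hi, hj] at hcpu
    · simp [hi, hj] at hcpu
    · have hmod : (i : ℕ) % c ≠ (j : ℕ) % c := by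
        intro hmm
        simp only [if_neg hi, if_neg hj] at hproc
        apply hij
        apply Fin.ext
        have h1 := Nat.div_add_mod (i : ℕ) c
        have h2 := Nat.div_add_mod (j : ℕ) c
        have h3 : c * ((i : ℕ) / c) = c * ((j : ℕ) / c) := by rw [hproc]
        omega
      simp only [pgf, hi, hj]
      exact slot_disj hs hmod

lemma SQA_consistent (m k c NB : ℕ) (s η : ℝ) (hm : 0 < m) (hk : 0 < k)
    (hkm : k ≤ m) (hc : 0 < c) (hs : 0 < s) (hη : 0 < η) :
    IsQAConsistent (SQA m k c NB s η hm hc hs.le) (precf k c) := by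
  have hμ := mu_pos hk hkm
  have hμk := mu_mul_sqrt (m := m) hk
  have hsk : (0:ℝ) < Real.sqrt k := Real.sqrt_pos.2 (by exact_mod_cast hk)
  have hkcpos : 0 < k * c := Nat.mul_pos hk hc
  have hkc1 : ¬ (k * c - 1 = k * c) := by omega
  have hkc1' : k * c - 1 < k * c + 1 := by omega
  have hc1 : ((c - 1 : ℕ) : ℝ) = (c : ℝ) - 1 := by
    push_cast [Nat.cast_sub (by exact hc : 1 ≤ c)]; ring
  have hmodc := (last_divmod hk hc).1
  -- finish time of task A
  have hfinA : ∀ (h' : k * c - 1 < k * c + 1),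
      Sched.finish (SQA m k c NB s η hm hc hs.le) ⟨k * c - 1, h'⟩ = (c:ℝ) * s := by
    intro h'
    show (if (k * c - 1 : ℕ) = k * c then _ else (((k * c - 1 : ℕ) % c : ℕ) : ℝ) * s)
        + Sched.ptime _ _ = (c:ℝ) * s
    rw [if_neg hkc1]
    have hpt : Sched.ptime (SQA m k c NB s η hm hc hs.le) ⟨k * c - 1, h'⟩ = s := by
      show (if (decide ((k*c-1 : ℕ) = k * c)) = true then _ else pgf k c s _) = s
      rw [if_neg (by simpa using hkc1)]
      show (if (k*c-1 : ℕ) = k * c then (1:ℝ) - s else s) = s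
      rw [if_neg hkc1]
    rw [hpt, hmodc, hc1]
    ring
  refine ⟨?_, ?_, ?_⟩
  · intro j
    by_cases h : (j : ℕ) = k * c
    · have key : mu m k * (1 - s) * Real.sqrt k ≤ (1 - s) * Real.sqrt m := by
        rw [← hμk]; exact le_of_eq (by ring)
      simp [SQA, pcf, pgf, h, key]
    · refine iff_of_false (by simp [SQA, h]) ?_
      rw [not_le]
      show (if (j:ℕ) = k*c then (1:ℝ) - s else s) * Real.sqrt m <
        (if (j:ℕ) = k*c then _ else if (j:ℕ) < NB then s * mu m k * (1+η)
          else 2 * mu m k * s) * Real.sqrt k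
      rw [if_neg h, if_neg h, ← hμk]
      by_cases h2 : (j:ℕ) < NB
      · rw [if_pos h2]; nlinarith [mul_pos (mul_pos hs hμ) hsk]
      · rw [if_neg h2]; nlinarith [mul_pos (mul_pos hs hμ) hsk]
  · rintro i j ⟨hi, hj⟩
    have hieq : i = ⟨k * c - 1, hkc1'⟩ := Fin.ext hi
    have hstartj : (SQA m k c NB s η hm hc hs.le).start j = (c:ℝ) * s := by
      simp [SQA, hj]
    rw [hieq, hfinA, hstartj]
  · intro t ht j hpred hfree
    obtain ⟨q, hq, hnb⟩ := hfree
    by_cases hj : (j : ℕ) = k * c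
    · have hA : Sched.finish (SQA m k c NB s η hm hc hs.le)
          ⟨k * c - 1, hkc1'⟩ ≤ t := hpred _ ⟨rfl, hj⟩
      rw [hfinA] at hA
      have : (SQA m k c NB s η hm hc hs.le).start j = (c:ℝ) * s := by
        simp [SQA, hj]
      rw [this]; exact hA
    · by_contra hcon
      push_neg at hcon
      have hstartj : (SQA m k c NB s η hm hc hs.le).start j
          = (((j : ℕ) % c : ℕ) : ℝ) * s := by simp [SQA, hj]
      rw [hstartj] at hcon
      have hcpu : (SQA m k c NB s η hm hc hs.le).cpu j = false := by
        simp [SQA, hj]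
      have hqk : q < k := by rw [hcpu] at hq; simpa using hq
      apply hnb
      rw [hcpu]
      set i0 : ℕ := ⌊t / s⌋₊ with hi0
      have hts : (i0 : ℝ) ≤ t / s := Nat.floor_le (by positivity)
      have hts2 : t / s < (i0 : ℝ) + 1 := Nat.lt_floor_add_one _
      have hi0start : (i0 : ℝ) * s ≤ t := by
        rw [← le_div_iff₀ hs]; exact hts
      have hi0fin : t < ((i0 : ℝ) + 1) * s := by
        rw [← div_lt_iff₀ hs]; exact hts2
      have hlt : i0 < (j : ℕ) % c := by
        by_contra hge
        push_neg at hge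
        have : (((j:ℕ) % c : ℕ) : ℝ) ≤ (i0 : ℝ) := by exact_mod_cast hge
        nlinarith
      have hjc : (j : ℕ) % c < c := Nat.mod_lt _ hc
      have hi0c : i0 + 1 < c := by omega
      have hidx : q * c + i0 < k * c := by
        calc q * c + i0 < q * c + c := by omega
        _ = (q + 1) * c := by ring
        _ ≤ k * c := Nat.mul_le_mul_right _ hqk
      have hne : ¬ (q * c + i0 = k * c) := by omega
      have hrw : q * c + i0 = i0 + c * q := by ring
      have hdiv : (q * c + i0) / c = q := by
        rw [hrw, Nat.add_mul_div_left _ _ hc, Nat.div_eq_of_lt (by omega)]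
        omega
      have hmod : (q * c + i0) % c = i0 := by
        rw [hrw, Nat.add_mul_mod_self_left, Nat.mod_eq_of_lt (by omega)]
      refine ⟨⟨q * c + i0, by omega⟩, ?_, ?_, ?_, ?_⟩
      · simp [SQA, hne]
      · show (if (q * c + i0 : ℕ) = k * c then 0 else (q * c + i0) / c) = q
        rw [if_neg hne, hdiv]
      · show (if (q * c + i0 : ℕ) = k * c then (c:ℝ) * s
            else (((q * c + i0 : ℕ) % c : ℕ) : ℝ) * s) ≤ t
        rw [if_neg hne, hmod]
        exact hi0start
      · show t < (if (q * c + i0 : ℕ) = k * c then (c:ℝ) * s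
            else (((q * c + i0 : ℕ) % c : ℕ) : ℝ) * s) + Sched.ptime _ _
        have hpt : Sched.ptime (SQA m k c NB s η hm hc hs.le)
            ⟨q * c + i0, by omega⟩ = s := by
          show (if (decide ((q * c + i0 : ℕ) = k * c)) = true then _
            else pgf k c s _) = s
          rw [if_neg (by simpa using hne)]
          show (if (q * c + i0 : ℕ) = k * c then (1:ℝ) - s else s) = s
          rw [if_neg hne]
        rw [if_neg hne, hpt, hmod]
        push_cast
        linarith

/-- The optimal schedule: `B`-tasks (`j < NB`) on CPUs (`n2` slots each), the
fillers on GPUs `1..k-1` (`n1` slots each), `A` at time 0 and `L` at time `s`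
on GPU 0. -/
noncomputable def SOPT (m k c NB n1 : ℕ) (s η : ℝ)
    (hm : 0 < m) (hk : 0 < k) (hc : 0 < c) (hs : 0 ≤ s) (hη : 0 ≤ η)
    (hmu0 : 0 ≤ mu m k)
    (hNBle : NB ≤ k * c - 1)
    (hNF : k * c - 1 - NB ≤ (k - 1) * n1) :
    Sched (Fin (k * c + 1)) m k (pcf m k c NB s η) (pgf k c s) where
  cpu j := decide ((j : ℕ) < NB)
  proc j := if (j : ℕ) < NB then (j : ℕ) % m
    else if (j : ℕ) < k * c - 1 then 1 + ((j : ℕ) - NB) % (k - 1) else 0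
  hproc j := by
    by_cases h : (j : ℕ) < NB
    · simpa [h] using Nat.mod_lt _ hm
    · by_cases h2 : (j : ℕ) < k * c - 1
      · have hk2 : 0 < k - 1 := by
          rcases Nat.eq_zero_or_pos (k - 1) with h0 | h0
          · rw [h0, Nat.zero_mul] at hNF
            omega
          · exact h0
        have := Nat.mod_lt ((j : ℕ) - NB) hk2
        simp only [h, h2, decide_eq_true_eq, if_false, if_true]
        omega
      · simp only [h, h2, decide_eq_true_eq, if_false]
        exact hk
  start j := if (j : ℕ) < NB then (((j : ℕ) / m : ℕ) : ℝ) * (s * mu m k * (1 + η))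
    else if (j : ℕ) < k * c - 1 then ((((j : ℕ) - NB) / (k - 1) : ℕ) : ℝ) * s
    else if (j : ℕ) = k * c then s else 0
  hstart j := by
    by_cases h : (j : ℕ) < NB
    · rw [if_pos h]; positivity
    · rw [if_neg h]
      by_cases h2 : (j : ℕ) < k * c - 1
      · rw [if_pos h2]; positivity
      · rw [if_neg h2]
        by_cases h3 : (j : ℕ) = k * c
        · rw [if_pos h3]; exact hs
        · rw [if_neg h3]
  disj i j hij hcpu hproc := by
    have hkc : 0 < k * c := Nat.mul_pos hk hc
    have hiv := i.isLt
    have hjv := j.isLt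
    by_cases hi : (i : ℕ) < NB <;> by_cases hj : (j : ℕ) < NB
    · -- both B-tasks, on CPUs
      have hmm : (i : ℕ) / m ≠ (j : ℕ) / m := by
        intro hdd
        simp only [if_pos hi, if_pos hj] at hproc
        apply hij; apply Fin.ext
        have h1 := Nat.div_add_mod (i : ℕ) m
        have h2 := Nat.div_add_mod (j : ℕ) m
        have h3 : m * ((i : ℕ) / m) = m * ((j : ℕ) / m) := by rw [hdd]
        omega
      have hiL : ¬ ((i : ℕ) = k * c) := by omega
      have hjL : ¬ ((j : ℕ) = k * c) := by omega
      simp only [pcf, hi, hj, hiL, hjL, decide_eq_true_eq, if_true, if_false]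
      exact slot_disj (by positivity) hmm
    · simp [hi, hj] at hcpu
    · simp [hi, hj] at hcpu
    · -- both on GPUs
      by_cases h2i : (i : ℕ) < k * c - 1 <;> by_cases h2j : (j : ℕ) < k * c - 1
      · -- two fillers
        have hmm : ((i : ℕ) - NB) / (k - 1) ≠ ((j : ℕ) - NB) / (k - 1) := by
          intro hdd
          simp only [if_neg hi, if_neg hj, if_pos h2i, if_pos h2j] at hproc
          have hmods : ((i : ℕ) - NB) % (k - 1) = ((j : ℕ) - NB) % (k - 1) := by
            omega
          apply hij; apply Fin.ext
          have h1 := Nat.div_add_mod ((i : ℕ) - NB) (k - 1)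
          have h2 := Nat.div_add_mod ((j : ℕ) - NB) (k - 1)
          have h3 : (k - 1) * (((i : ℕ) - NB) / (k - 1))
              = (k - 1) * (((j : ℕ) - NB) / (k - 1)) := by rw [hdd]
          omega
        have hiL : ¬ ((i : ℕ) = k * c) := by omega
        have hjL : ¬ ((j : ℕ) = k * c) := by omega
        simp only [pgf, hi, hj, h2i, h2j, hiL, hjL, decide_eq_true_eq,
          if_true, if_false]
        exact slot_disj hs hmm
      · -- filler with A or L : different processors, contradiction
        exfalso
        simp only [if_neg hi, if_neg hj, if_pos h2i, if_neg h2j] at hproc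
        omega
      · exfalso
        simp only [if_neg hi, if_neg hj, if_neg h2i, if_pos h2j] at hproc
        omega
      · -- both among {A, L}
        have hij' : (i : ℕ) ≠ (j : ℕ) := fun h => hij (Fin.ext h)
        rcases (by omega : (i : ℕ) = k * c - 1 ∧ (j : ℕ) = k * c ∨
            (i : ℕ) = k * c ∧ (j : ℕ) = k * c - 1) with ⟨hA, hL⟩ | ⟨hL, hA⟩
        · left
          have hiL : ¬ ((i : ℕ) = k * c) := by omega
          simp only [pgf, hi, hj, h2i, h2j, hiL, hL, decide_eq_true_eq,
            if_true, if_false]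
          rw [if_neg (by omega : ¬ (k * c < NB)),
            if_neg (by omega : ¬ (k * c < k * c - 1))]
          norm_num
        · right
          have hjL : ¬ ((j : ℕ) = k * c) := by omega
          simp only [pgf, hi, hj, h2i, h2j, hjL, hL, decide_eq_true_eq,
            if_true, if_false]
          rw [if_neg (by omega : ¬ (k * c < NB)),
            if_neg (by omega : ¬ (k * c < k * c - 1))]
          norm_num

lemma SOPT_finish_le (m k c NB n1 n2 : ℕ) (s η : ℝ)
    (hm : 0 < m) (hk : 0 < k) (hc : 0 < c) (hs : 0 ≤ s) (hη : 0 ≤ η)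
    (hmu0 : 0 ≤ mu m k) (hNBle : NB ≤ k * c - 1)
    (hNF : k * c - 1 - NB ≤ (k - 1) * n1)
    (hNB2 : NB ≤ m * n2)
    (hn2u : (n2 : ℝ) * (s * mu m k * (1 + η)) ≤ 1)
    (hn1u : (n1 : ℝ) * s ≤ 1) (hs1 : s ≤ 1) :
    ∀ j, Sched.finish
      (SOPT m k c NB n1 s η hm hk hc hs hη hmu0 hNBle hNF) j ≤ 1 := by
  intro j
  have hkc : 0 < k * c := Nat.mul_pos hk hc
  have hjv := j.isLt
  rw [Sched.finish, Sched.ptime]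
  by_cases h : (j : ℕ) < NB
  · -- B-task on a CPU
    have hjL : ¬ ((j : ℕ) = k * c) := by omega
    have hdiv : (j : ℕ) / m + 1 ≤ n2 := by
      have : (j : ℕ) / m < n2 := (Nat.div_lt_iff_lt_mul hm).2 (by
        calc (j : ℕ) < NB := h
        _ ≤ m * n2 := hNB2
        _ = n2 * m := by ring)
      omega
    have hdiv' : (((j : ℕ) / m : ℕ) : ℝ) + 1 ≤ (n2 : ℝ) := by exact_mod_cast hdiv
    have hb : (0:ℝ) ≤ s * mu m k * (1 + η) := by positivity
    show (if (j:ℕ) < NB then (((j:ℕ)/m : ℕ):ℝ) * (s * mu m k * (1+η))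
        else _) + (if _ = true then _ else _) ≤ 1
    rw [if_pos h]
    have hcpu : (SOPT m k c NB n1 s η hm hk hc hs hη hmu0 hNBle hNF).cpu j
        = true := by simp [SOPT, h]
    rw [if_pos hcpu]
    show _ + (if (j:ℕ) = k*c then _ else if (j:ℕ) < NB then s * mu m k * (1+η)
        else _) ≤ 1
    rw [if_neg hjL, if_pos h]
    calc (((j:ℕ)/m : ℕ):ℝ) * (s * mu m k * (1+η)) + s * mu m k * (1+η)
        = ((((j:ℕ)/m : ℕ):ℝ) + 1) * (s * mu m k * (1+η)) := by ring
    _ ≤ (n2:ℝ) * (s * mu m k * (1+η)) := mul_le_mul_of_nonneg_right hdiv' hb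
    _ ≤ 1 := hn2u
  · have hcpu : (SOPT m k c NB n1 s η hm hk hc hs hη hmu0 hNBle hNF).cpu j
        = false := by simp [SOPT, h]
    rw [if_neg (by rw [hcpu]; simp : ¬ ((SOPT m k c NB n1 s η hm hk hc hs hη
      hmu0 hNBle hNF).cpu j = true))]
    by_cases h2 : (j : ℕ) < k * c - 1
    · -- filler on a GPU
      have hjL : ¬ ((j : ℕ) = k * c) := by omega
      have hk2 : 0 < k - 1 := by
        rcases Nat.eq_zero_or_pos (k - 1) with h0 | h0
        · rw [h0, Nat.zero_mul] at hNF; omega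
        · exact h0
      have hdiv : ((j : ℕ) - NB) / (k - 1) + 1 ≤ n1 := by
        have : ((j : ℕ) - NB) / (k - 1) < n1 := (Nat.div_lt_iff_lt_mul hk2).2 (by
          calc (j : ℕ) - NB < k * c - 1 - NB := by omega
          _ ≤ (k - 1) * n1 := hNF
          _ = n1 * (k - 1) := by ring)
        omega
      have hdiv' : ((((j : ℕ) - NB) / (k-1) : ℕ):ℝ) + 1 ≤ (n1 : ℝ) := by
        exact_mod_cast hdiv
      show (if (j:ℕ) < NB then _ else if (j:ℕ) < k*c - 1
          then ((((j:ℕ) - NB)/(k-1) : ℕ):ℝ) * s else _)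
          + (if (j:ℕ) = k*c then (1:ℝ) - s else s) ≤ 1
      rw [if_neg h, if_pos h2, if_neg hjL]
      calc ((((j:ℕ) - NB)/(k-1) : ℕ):ℝ) * s + s
          = (((((j:ℕ) - NB)/(k-1) : ℕ):ℝ) + 1) * s := by ring
      _ ≤ (n1:ℝ) * s := mul_le_mul_of_nonneg_right hdiv' hs
      _ ≤ 1 := hn1u
    · by_cases h3 : (j : ℕ) = k * c
      · -- L
        show (if (j:ℕ) < NB then _ else if (j:ℕ) < k*c - 1 then _
            else if (j:ℕ) = k*c then s else (0:ℝ))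
            + (if (j:ℕ) = k*c then (1:ℝ) - s else s) ≤ 1
        rw [if_neg h, if_neg h2, if_pos h3, if_pos h3]
        linarith
      · -- A
        show (if (j:ℕ) < NB then _ else if (j:ℕ) < k*c - 1 then _
            else if (j:ℕ) = k*c then s else (0:ℝ))
            + (if (j:ℕ) = k*c then (1:ℝ) - s else s) ≤ 1
        rw [if_neg h, if_neg h2, if_neg h3, if_neg h3]
        linarith

lemma SOPT_finish_L (m k c NB n1 : ℕ) (s η : ℝ)
    (hm : 0 < m) (hk : 0 < k) (hc : 0 < c) (hs : 0 ≤ s) (hη : 0 ≤ η)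
    (hmu0 : 0 ≤ mu m k) (hNBle : NB ≤ k * c - 1)
    (hNF : k * c - 1 - NB ≤ (k - 1) * n1) (h' : k * c < k * c + 1) :
    Sched.finish (SOPT m k c NB n1 s η hm hk hc hs hη hmu0 hNBle hNF)
      ⟨k * c, h'⟩ = 1 := by
  have hkc : 0 < k * c := Nat.mul_pos hk hc
  have hcpu : (SOPT m k c NB n1 s η hm hk hc hs hη hmu0 hNBle hNF).cpu
      ⟨k * c, h'⟩ = false := by simp [SOPT]; omega
  rw [Sched.finish, Sched.ptime, if_neg (by rw [hcpu]; simp)]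
  show (if (k*c : ℕ) < NB then _ else if (k*c : ℕ) < k*c - 1 then _
      else if (k*c : ℕ) = k*c then s else (0:ℝ))
      + (if (k*c : ℕ) = k*c then (1:ℝ) - s else s) = 1
  rw [if_neg (by omega : ¬ (k*c < NB)), if_neg (by omega : ¬ (k*c < k*c - 1)),
    if_pos rfl, if_pos rfl]
  ring

lemma SOPT_prec (m k c NB n1 : ℕ) (s η : ℝ)
    (hm : 0 < m) (hk : 0 < k) (hc : 0 < c) (hs : 0 ≤ s) (hη : 0 ≤ η)
    (hmu0 : 0 ≤ mu m k) (hNBle : NB ≤ k * c - 1)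
    (hNF : k * c - 1 - NB ≤ (k - 1) * n1) :
    ∀ i j, precf k c i j →
      Sched.finish (SOPT m k c NB n1 s η hm hk hc hs hη hmu0 hNBle hNF) i ≤
      (SOPT m k c NB n1 s η hm hk hc hs hη hmu0 hNBle hNF).start j := by
  rintro i j ⟨hi, hj⟩
  have hkc : 0 < k * c := Nat.mul_pos hk hc
  have hiL : ¬ ((i : ℕ) = k * c) := by omega
  have hcpu : (SOPT m k c NB n1 s η hm hk hc hs hη hmu0 hNBle hNF).cpu i
      = false := by simp [SOPT]; omega
  rw [Sched.finish, Sched.ptime, if_neg (by rw [hcpu]; simp)]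
  have hstartj : (SOPT m k c NB n1 s η hm hk hc hs hη hmu0 hNBle hNF).start j
      = s := by
    show (if (j:ℕ) < NB then _ else if (j:ℕ) < k*c - 1 then _
        else if (j:ℕ) = k*c then s else (0:ℝ)) = s
    rw [if_neg (by omega : ¬ ((j:ℕ) < NB)),
      if_neg (by omega : ¬ ((j:ℕ) < k*c - 1)), if_pos hj]
  rw [hstartj]
  show (if (i:ℕ) < NB then _ else if (i:ℕ) < k*c - 1 then _
      else if (i:ℕ) = k*c then s else (0:ℝ))
      + (if (i:ℕ) = k*c then (1:ℝ) - s else s) ≤ s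
  rw [if_neg (by omega : ¬ ((i:ℕ) < NB)),
    if_neg (by omega : ¬ ((i:ℕ) < k*c - 1)), if_neg hiL, if_neg hiL]
  linarith

/-- chain lower bound for any precedence-respecting schedule -/
lemma chain_lb (m k c NB : ℕ) (s η : ℝ) (hk : 0 < k) (hkm : k ≤ m)
    (hc : 0 < c) (hs : 0 ≤ s) (hs1 : s ≤ 1) (hη : 0 ≤ η) (hn : 0 < k * c + 1)
    (S' : Sched (Fin (k * c + 1)) m k (pcf m k c NB s η) (pgf k c s))
    (hp : ∀ i j, precf k c i j → Sched.finish S' i ≤ S'.start j) :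
    (1 : ℝ) ≤ Sched.makespan ⟨⟨0, hn⟩⟩ S' := by
  have hμ1 : 1 ≤ mu m k := one_le_mu hk hkm
  have hkc : 0 < k * c := Nat.mul_pos hk hc
  set A : Fin (k * c + 1) := ⟨k * c - 1, by omega⟩
  set L : Fin (k * c + 1) := ⟨k * c, by omega⟩
  have hAL := hp A L ⟨rfl, rfl⟩
  have hptA : s ≤ Sched.ptime S' A := by
    rw [Sched.ptime]
    by_cases h : S'.cpu A = true
    · rw [if_pos h]
      show s ≤ pcf m k c NB s η A
      rw [pcf]
      rw [if_neg (by simp [A]; omega : ¬ ((A:ℕ) = k*c))]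
      have hμη : 1 ≤ mu m k * (1 + η) := by nlinarith
      by_cases h2 : (A : ℕ) < NB
      · rw [if_pos h2]
        nlinarith [mul_le_mul_of_nonneg_left hμη hs]
      · rw [if_neg h2]
        nlinarith [mul_le_mul_of_nonneg_left hμ1 hs]
    · rw [if_neg h]
      show s ≤ pgf k c s A
      rw [pgf, if_neg (by simp [A]; omega : ¬ ((A:ℕ) = k*c))]
  have hptL : 1 - s ≤ Sched.ptime S' L := by
    rw [Sched.ptime]
    by_cases h : S'.cpu L = true
    · rw [if_pos h]
      show 1 - s ≤ pcf m k c NB s η L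
      rw [pcf, if_pos (rfl : (L:ℕ) = k*c)]
      nlinarith [mul_le_mul_of_nonneg_right hμ1 (by linarith : (0:ℝ) ≤ 1 - s)]
    · rw [if_neg h]
      show 1 - s ≤ pgf k c s L
      rw [pgf, if_pos (rfl : (L:ℕ) = k*c)]
  have h1 : (1:ℝ) ≤ Sched.finish S' L := by
    rw [Sched.finish]
    have h2 : s ≤ S'.start L := by
      have h3 := S'.hstart A
      have h4 : Sched.finish S' A = S'.start A + Sched.ptime S' A := rfl
      linarith [hAL, h4 ▸ hAL]
    linarith
  calc (1:ℝ) ≤ Sched.finish S' L := h1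
  _ ≤ Sched.makespan ⟨⟨0, hn⟩⟩ S' := Finset.le_sup' _ (Finset.mem_univ L)

lemma SQA_finish_L (m k c NB : ℕ) (s η : ℝ) (hm : 0 < m) (hc : 0 < c)
    (hs : 0 ≤ s) (h' : k * c < k * c + 1) :
    Sched.finish (SQA m k c NB s η hm hc hs) ⟨k * c, h'⟩
      = (c : ℝ) * s + mu m k * (1 - s) := by
  rw [Sched.finish, Sched.ptime]
  have hcpu : (SQA m k c NB s η hm hc hs).cpu ⟨k * c, h'⟩ = true := by
    simp [SQA]
  rw [if_pos hcpu]
  show (if (k * c : ℕ) = k * c then (c:ℝ) * s else _)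
      + (if (k * c : ℕ) = k * c then mu m k * (1 - s) else _)
      = (c : ℝ) * s + mu m k * (1 - s)
  rw [if_pos rfl, if_pos rfl]

lemma pq_pos (m k c NB : ℕ) (s η : ℝ) (hk : 0 < k) (hkm : k ≤ m)
    (hs : 0 < s) (hs1 : s < 1) (hη : 0 ≤ η) :
    ∀ j : Fin (k * c + 1), 0 < pcf m k c NB s η j ∧ 0 < pgf k c s j := by
  intro j
  have hμ := mu_pos hk hkm
  constructor
  · rw [pcf]
    split_ifs
    · nlinarith
    · positivity
    · positivity
  · rw [pgf]
    split_ifs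
    · linarith
    · exact hs

end QALB

set_option maxHeartbeats 1000000 in
/-- the competitive ratio of QA is at least
`2√(m/k) + 1 - 1/k`: for every `ε > 0` there is a DAG instance, with optimal
makespan `Copt > 0`, on which a QA-consistent schedule has makespan at least
`(2√(m/k) + 1 - 1/k - ε)·Copt`. -/
theorem qa_lower_bound
    (m k : ℕ) (hk : 0 < k) (hkm : k ≤ m) (ε : ℝ) (hε : 0 < ε) :
    ∃ (n : ℕ) (hn : 0 < n) (pc pg : Fin n → ℝ)
      (prec : Fin n → Fin n → Prop),
      (∀ j, 0 < pc j ∧ 0 < pg j) ∧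
      ∃ Sqa Sopt : Sched (Fin n) m k pc pg,
        IsQAConsistent Sqa prec ∧
        (∀ i j, prec i j → Sched.finish Sopt i ≤ Sopt.start j) ∧
        (∀ S' : Sched (Fin n) m k pc pg,
          (∀ i j, prec i j → Sched.finish S' i ≤ S'.start j) →
          Sched.makespan ⟨⟨0, hn⟩⟩ Sopt ≤ Sched.makespan ⟨⟨0, hn⟩⟩ S') ∧
        0 < Sched.makespan ⟨⟨0, hn⟩⟩ Sopt ∧
        (2 * Real.sqrt ((m : ℝ) / k) + 1 - 1 / k - ε) *
            Sched.makespan ⟨⟨0, hn⟩⟩ Sopt ≤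
          Sched.makespan ⟨⟨0, hn⟩⟩ Sqa := by
  classical
  have hm : 0 < m := lt_of_lt_of_le hk hkm
  obtain ⟨μ, hμdef⟩ : ∃ x : ℝ, x = QALB.mu m k := ⟨_, rfl⟩
  have hμ1 : 1 ≤ μ := by rw [hμdef]; exact QALB.one_le_mu hk hkm
  have hμ0 : 0 < μ := by linarith
  have hkR : (0:ℝ) < k := by exact_mod_cast hk
  obtain ⟨η, hηdef⟩ : ∃ x : ℝ, x = ε / (2 * μ) := ⟨_, rfl⟩
  have hη : 0 < η := by rw [hηdef]; positivity
  have hμη : μ * η = ε / 2 := by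
    rw [hηdef]
    field_simp
  obtain ⟨s, hsdef⟩ : ∃ x : ℝ,
      x = min (1 / (2 * μ * (1 + η))) (ε / (2 * (μ^2 + μ + 2))) := ⟨_, rfl⟩
  have hs0 : 0 < s := by
    rw [hsdef]; exact lt_min (by positivity) (by positivity)
  have hsA : s ≤ 1 / (2 * μ * (1 + η)) := hsdef ▸ min_le_left _ _
  have hsB : s ≤ ε / (2 * (μ^2 + μ + 2)) := hsdef ▸ min_le_right _ _
  have hsB' : s * (μ^2 + μ + 2) ≤ ε / 2 := by
    rw [le_div_iff₀ (by positivity : (0:ℝ) < 2 * (μ^2 + μ + 2))] at hsB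
    linarith
  have hsA' : s * (2 * μ * (1 + η)) ≤ 1 := by
    rw [le_div_iff₀ (by positivity)] at hsA
    linarith
  have hs1 : s ≤ 1/2 := by nlinarith
  obtain ⟨b, hbdef⟩ : ∃ x : ℝ, x = s * μ * (1 + η) := ⟨_, rfl⟩
  have hb0 : 0 < b := by rw [hbdef]; positivity
  have hb1 : b ≤ 1 := by rw [hbdef]; nlinarith
  obtain ⟨n1, hn1def⟩ : ∃ x : ℕ, x = ⌊1 / s⌋₊ := ⟨_, rfl⟩
  obtain ⟨n2, hn2def⟩ : ∃ x : ℕ, x = ⌊1 / b⌋₊ := ⟨_, rfl⟩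
  have hn1u : (n1:ℝ) * s ≤ 1 := by
    have h : (n1:ℝ) ≤ 1/s := by
      rw [hn1def]; exact Nat.floor_le (by positivity)
    rw [← le_div_iff₀ hs0]
    exact h
  have hn2u : (n2:ℝ) * b ≤ 1 := by
    have h : (n2:ℝ) ≤ 1/b := by
      rw [hn2def]; exact Nat.floor_le (by positivity)
    rw [← le_div_iff₀ hb0]
    exact h
  have hn1l : 1/s - 1 < (n1:ℝ) := by rw [hn1def]; exact Nat.sub_one_lt_floor _
  have hn2l : 1/b - 1 < (n2:ℝ) := by rw [hn2def]; exact Nat.sub_one_lt_floor _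
  have hn2p : 1 ≤ n2 := by
    rw [hn2def]
    apply Nat.le_floor
    rw [Nat.cast_one, le_div_iff₀ hb0]
    linarith
  obtain ⟨X, hXdef⟩ : ∃ x : ℕ, x = m * n2 + (k-1) * n1 + 1 := ⟨_, rfl⟩
  obtain ⟨c, hcdef⟩ : ∃ x : ℕ, x = X / k := ⟨_, rfl⟩
  have hXk : k ≤ X := by
    have h1 : m ≤ m * n2 := Nat.le_mul_of_pos_right m hn2p
    omega
  have hc : 0 < c := by rw [hcdef]; exact Nat.div_pos hXk hk
  have hkcX : k * c ≤ X := by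
    rw [hcdef, mul_comm]; exact Nat.div_mul_le_self X k
  have hXkc : X < k * c + k := by
    have h1 := Nat.div_add_mod X k
    have h2 := Nat.mod_lt X hk
    rw [hcdef]
    omega
  obtain ⟨NB, hNBdef⟩ : ∃ x : ℕ, x = min (k * c - 1) (m * n2) := ⟨_, rfl⟩
  have hNBle : NB ≤ k * c - 1 := hNBdef ▸ min_le_left _ _
  have hNB2 : NB ≤ m * n2 := hNBdef ▸ min_le_right _ _
  have hkc : 0 < k * c := Nat.mul_pos hk hc
  have hkcX' : k * c ≤ m * n2 + (k-1) * n1 + 1 := by rw [← hXdef]; exact hkcX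
  have hNF : k * c - 1 - NB ≤ (k - 1) * n1 := by
    rcases le_total (k * c - 1) (m * n2) with h | h
    · rw [hNBdef, min_eq_left h]
      omega
    · rw [hNBdef, min_eq_right h]
      omega
  -- real identities
  have hmR : (m:ℝ) = k * μ^2 := by
    have h := QALB.mu_sq (m := m) hk
    rw [← hμdef, eq_div_iff (ne_of_gt hkR)] at h
    linarith
  have hsq : Real.sqrt ((m:ℝ) / k) = μ := by rw [hμdef, QALB.mu]
  have hμ0' : 0 ≤ QALB.mu m k := by rw [← hμdef]; exact hμ0.le
  -- the two schedules
  refine ⟨k * c + 1, by omega, QALB.pcf m k c NB s η, QALB.pgf k c s,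
    QALB.precf k c,
    QALB.pq_pos m k c NB s η hk hkm hs0 (by linarith) hη.le,
    QALB.SQA m k c NB s η hm hc hs0.le,
    QALB.SOPT m k c NB n1 s η hm hk hc hs0.le hη.le hμ0' hNBle hNF,
    QALB.SQA_consistent m k c NB s η hm hk hkm hc hs0 hη,
    QALB.SOPT_prec m k c NB n1 s η hm hk hc hs0.le hη.le hμ0' hNBle hNF,
    ?_, ?_, ?_⟩
  · intro S' hS'
    have h1 : Sched.makespan ⟨⟨0, by omega⟩⟩
        (QALB.SOPT m k c NB n1 s η hm hk hc hs0.le hη.le hμ0' hNBle hNF)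
        ≤ 1 := by
      apply Finset.sup'_le
      intro j _
      exact QALB.SOPT_finish_le m k c NB n1 n2 s η hm hk hc hs0.le hη.le
        hμ0' hNBle hNF hNB2 (by rw [← hμdef, ← hbdef]; exact hn2u) hn1u
        (by linarith) j
    refine le_trans h1 ?_
    exact QALB.chain_lb m k c NB s η hk hkm hc hs0.le (by linarith) hη.le (by omega) S' hS'
  · have h2 : (1:ℝ) ≤ Sched.makespan ⟨⟨0, by omega⟩⟩
        (QALB.SOPT m k c NB n1 s η hm hk hc hs0.le hη.le hμ0' hNBle hNF) := by
      have h := Finset.le_sup' (Sched.finish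
        (QALB.SOPT m k c NB n1 s η hm hk hc hs0.le hη.le hμ0' hNBle hNF))
        (Finset.mem_univ (⟨k * c, by omega⟩ : Fin (k * c + 1)))
      rw [QALB.SOPT_finish_L m k c NB n1 s η hm hk hc hs0.le hη.le hμ0'
        hNBle hNF (by omega)] at h
      exact h
    linarith
  · have hOPTle : Sched.makespan ⟨⟨0, by omega⟩⟩
        (QALB.SOPT m k c NB n1 s η hm hk hc hs0.le hη.le hμ0' hNBle hNF)
        ≤ 1 := by
      apply Finset.sup'_le
      intro j _
      exact QALB.SOPT_finish_le m k c NB n1 n2 s η hm hk hc hs0.le hη.le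
        hμ0' hNBle hNF hNB2 (by rw [← hμdef, ← hbdef]; exact hn2u) hn1u
        (by linarith) j
    have hOPTge : (1:ℝ) ≤ Sched.makespan ⟨⟨0, by omega⟩⟩
        (QALB.SOPT m k c NB n1 s η hm hk hc hs0.le hη.le hμ0' hNBle hNF) := by
      have h := Finset.le_sup' (Sched.finish
        (QALB.SOPT m k c NB n1 s η hm hk hc hs0.le hη.le hμ0' hNBle hNF))
        (Finset.mem_univ (⟨k * c, by omega⟩ : Fin (k * c + 1)))
      rw [QALB.SOPT_finish_L m k c NB n1 s η hm hk hc hs0.le hη.le hμ0'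
        hNBle hNF (by omega)] at h
      exact h
    have hQAms : (c:ℝ) * s + QALB.mu m k * (1 - s) ≤ Sched.makespan ⟨⟨0, by omega⟩⟩
        (QALB.SQA m k c NB s η hm hc hs0.le) := by
      have h := Finset.le_sup' (Sched.finish (QALB.SQA m k c NB s η hm hc hs0.le))
        (Finset.mem_univ (⟨k * c, by omega⟩ : Fin (k * c + 1)))
      rw [QALB.SQA_finish_L m k c NB s η hm hc hs0.le (by omega)] at h
      exact h
    rw [← hμdef] at hQAms
    have hratio : 2 * μ + 1 - 1/(k:ℝ) - ε ≤ (c:ℝ) * s + μ * (1 - s) := by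
      have hXr : (X:ℝ) = (m:ℝ) * n2 + ((k:ℝ) - 1) * n1 + 1 := by
        rw [hXdef]
        push_cast [Nat.cast_sub hk]
        ring
      have f1 : (X:ℝ) + 1 ≤ (k:ℝ) * c + k := by
        have f1' : X + 1 ≤ k * c + k := hXkc
        exact_mod_cast f1'
      have hk1R : (1:ℝ) ≤ (k:ℝ) := by exact_mod_cast hk
      obtain ⟨D, hDdef⟩ : ∃ x : ℝ, x = 1/(μ * (1 + η)) := ⟨_, rfl⟩
      have g2 : 1 - s ≤ (n1:ℝ) * s := by
        have e : (1/s - 1) * s = 1 - s := by field_simp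
        rw [← e]
        exact mul_le_mul_of_nonneg_right hn1l.le hs0.le
      have g1 : D - s ≤ (n2:ℝ) * s := by
        have e : (1/b - 1) * s = D - s := by
          rw [hDdef, hbdef]
          field_simp
        rw [← e]
        exact mul_le_mul_of_nonneg_right hn2l.le hs0.le
      have g3 : (k:ℝ) * μ - (k:ℝ) * (ε/2) ≤ (k:ℝ) * μ / (1 + η) := by
        rw [le_div_iff₀ (by positivity : (0:ℝ) < 1 + η)]
        have e : (k:ℝ) * (ε/2) = (k:ℝ) * (μ * η) := by rw [hμη]
        nlinarith [mul_nonneg (mul_nonneg hkR.le hμ0.le) (mul_nonneg hη.le hη.le)]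
      have e2 : (m:ℝ) * D = (k:ℝ) * μ / (1 + η) := by
        rw [hDdef, hmR]
        field_simp
      have g3' : (k:ℝ) * μ - (k:ℝ) * (ε/2) ≤ (m:ℝ) * D := by
        rw [e2]; exact g3
      have t1 : (m:ℝ) * D - (m:ℝ) * s ≤ (m:ℝ) * ((n2:ℝ) * s) := by
        calc (m:ℝ) * D - (m:ℝ) * s = (m:ℝ) * (D - s) := by ring
        _ ≤ _ := mul_le_mul_of_nonneg_left g1 (Nat.cast_nonneg m)
      have t2 : ((k:ℝ) - 1) * (1 - s) ≤ ((k:ℝ) - 1) * ((n1:ℝ) * s) :=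
        mul_le_mul_of_nonneg_left g2 (by linarith)
      have t3 : ((X:ℝ) + 1 - k) * s ≤ (k:ℝ) * ((c:ℝ) * s) := by
        calc ((X:ℝ) + 1 - k) * s ≤ ((k:ℝ) * c) * s :=
          mul_le_mul_of_nonneg_right (by linarith) hs0.le
        _ = (k:ℝ) * ((c:ℝ) * s) := by ring
      have hXs' : ((X:ℝ) + 1 - k) * s
          = (m:ℝ) * ((n2:ℝ) * s) + ((k:ℝ) - 1) * ((n1:ℝ) * s)
            + (2 - (k:ℝ)) * s := by
        rw [hXr]; ring
      have main : (k:ℝ) * μ - (k:ℝ) * (ε/2) - (m:ℝ) * s + ((k:ℝ) - 1) * (1 - s)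
          + (2 - (k:ℝ)) * s ≤ (k:ℝ) * ((c:ℝ) * s) := by
        linarith [t1, t2, t3, g3', hXs']
      have t4 : (k:ℝ) * (s * (μ^2 + μ + 2)) ≤ (k:ℝ) * (ε/2) :=
        mul_le_mul_of_nonneg_left hsB' hkR.le
      have hms : (m:ℝ) * s = (k:ℝ) * (μ^2 * s) := by rw [hmR]; ring
      have hkinv : (k:ℝ) * (1/(k:ℝ)) = 1 := by field_simp
      have E1 : (k:ℝ) * ((c:ℝ) * s + μ * (1 - s))
          = (k:ℝ) * ((c:ℝ) * s) + (k:ℝ) * μ - (k:ℝ) * (μ * s) := by ring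
      have E2 : (k:ℝ) * (2 * μ + 1 - 1/(k:ℝ) - ε)
          = 2 * ((k:ℝ) * μ) + (k:ℝ) - (k:ℝ) * (1/(k:ℝ)) - (k:ℝ) * ε := by ring
      have E3 : ((k:ℝ) - 1) * (1 - s) = (k:ℝ) - 1 - (k:ℝ) * s + s := by ring
      have E4 : (2 - (k:ℝ)) * s = 2 * s - (k:ℝ) * s := by ring
      have E5 : (k:ℝ) * (s * (μ^2 + μ + 2))
          = (k:ℝ) * (μ^2 * s) + (k:ℝ) * (μ * s) + 2 * ((k:ℝ) * s) := by ring
      have E6 : (k:ℝ) * (ε/2) + (k:ℝ) * (ε/2) = (k:ℝ) * ε := by ring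
      have E7 : 0 ≤ (k:ℝ) * s := mul_nonneg hkR.le hs0.le
      have hfin : (k:ℝ) * (2 * μ + 1 - 1/(k:ℝ) - ε)
          ≤ (k:ℝ) * ((c:ℝ) * s + μ * (1 - s)) := by
        rw [E1, E2, hkinv]
        linarith [main, t4, hms, E3, E4, E5, E6, E7, hs0.le]
      exact le_of_mul_le_mul_left hfin hkR
    have hOPT : Sched.makespan ⟨⟨0, by omega⟩⟩
        (QALB.SOPT m k c NB n1 s η hm hk hc hs0.le hη.le hμ0' hNBle hNF)
        = 1 := le_antisymm hOPTle hOPTge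
    rw [hOPT, mul_one, hsq]
    calc 2 * μ + 1 - 1/(k:ℝ) - ε ≤ (c:ℝ) * s + μ * (1 - s) := hratio
    _ ≤ _ := hQAms
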